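/- arXiv:1410.4374 — 3 statements merged into one kernel-verified Lean document; each statement's English description precedes it below -/
import Mathlib

section
/- Let G ⊂ SL(3,ℂ) be a nontrivial finite abelian subgroup acting effectively and diagonally, with G_0 = {g ∈ G : F_g^(0) = 0} ≠ G. Then there exists h ∈ G with age a(h) = 1 and F_h^(0) = 1/|G/G_0|. -/
/-!
Each coordinate `F · j` is the `[0, 1)`-representative of a character `G → ℝ/ℤ`. The image of
the first one is a subgroup of `ℝ/ℤ` of order `m = |G/G₀|`, so it is the whole `m`-torsion
`{k/m}` and some element has first shift `1/m`. Among those, take `h` with the smallest second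
shift. Age `2` would force `F h 1 > 1 - 1/m`, and then `(1 - m) • h` would still have first
shift `1/m` but the smaller second shift `(m - 1)(1 - F h 1)`.
-/

structure IsFractionalCharacter {G : Type*} [AddGroup G] (f : G → ℝ) : Prop where
  mem_Ico : ∀ g, f g ∈ Set.Ico 0 1
  map_add : ∀ g h, f (g + h) = Int.fract (f g + f h)

namespace IsFractionalCharacter

variable {G : Type*} [AddGroup G]

section

variable {f : G → ℝ} (hf : IsFractionalCharacter f)
include hf

def toAddCircle : G →+ AddCircle (1 : ℝ) :=
  AddMonoidHom.mk' (fun g => (f g : AddCircle (1 : ℝ))) fun g h => by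
    rw [hf.map_add, AddCircle.coe_fract, AddCircle.coe_add]

lemma toAddCircle_apply (g : G) : hf.toAddCircle g = f g := rfl

lemma apply_eq_of_toAddCircle_eq {g : G} {x : ℝ} (hx : x ∈ Set.Ico 0 1)
    (h : hf.toAddCircle g = x) : f g = x :=
  (AddCircle.coe_eq_coe_iff_of_mem_Ico (a := 0) (by simpa using hf.mem_Ico g)
    (by simpa using hx)).1 h

lemma apply_zsmul (n : ℤ) (g : G) : f (n • g) = Int.fract (n * f g) := by
  refine hf.apply_eq_of_toAddCircle_eq ⟨Int.fract_nonneg _, Int.fract_lt_one _⟩ ?_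
  rw [AddCircle.coe_fract, map_zsmul, toAddCircle_apply, ← AddCircle.coe_zsmul, zsmul_eq_mul]

lemma mem_ker_toAddCircle_iff {g : G} : g ∈ hf.toAddCircle.ker ↔ f g = 0 := by
  rw [AddMonoidHom.mem_ker, toAddCircle_apply, AddCircle.coe_eq_zero_iff_of_mem_Ico (hf.mem_Ico g)]

lemma card_eq_card_zero_mul_card_range :
    Nat.card G = Nat.card {g // f g = 0} * Nat.card hf.toAddCircle.range := by
  rw [← AddSubgroup.index_ker, ← hf.toAddCircle.ker.card_mul_index]
  congr 1
  exact Nat.card_congr (Equiv.subtypeEquivRight fun _ => hf.mem_ker_toAddCircle_iff)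

instance finite_range_toAddCircle [Finite G] : Finite hf.toAddCircle.range :=
  Finite.Set.finite_range hf.toAddCircle

lemma one_lt_card_range [Finite G] (hne : ∃ g, f g ≠ 0) : 1 < Nat.card hf.toAddCircle.range := by
  obtain ⟨g, hg⟩ := hne
  refine Finite.one_lt_card_iff_nontrivial.2 ⟨⟨hf.toAddCircle g, ⟨g, rfl⟩⟩, 0, fun h => hg ?_⟩
  rw [← hf.mem_ker_toAddCircle_iff, AddMonoidHom.mem_ker]
  exact congrArg Subtype.val h

lemma coe_range_toAddCircle_eq_torsion [Finite G] :
    (hf.toAddCircle.range : Set (AddCircle (1 : ℝ))) =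
      {u | Nat.card hf.toAddCircle.range • u = 0} := by
  have hfin : (hf.toAddCircle.range : Set (AddCircle (1 : ℝ))).Finite :=
    Set.finite_coe_iff.1 hf.finite_range_toAddCircle
  have hm : Nat.card hf.toAddCircle.range ≠ 0 := Nat.card_pos.ne'
  refine hfin.eq_of_subset_of_encard_le (fun _ hu => ?_) ?_
  · exact congrArg Subtype.val (card_nsmul_eq_zero' (x := (⟨_, hu⟩ : hf.toAddCircle.range)))
  · rw [← hfin.cast_ncard_eq]
    exact AddCircle.card_torsion_le_of_isSMulRegular _ _ hm
      (.of_right_eq_zero_of_smul fun _ ↦ (smul_eq_zero.1 · |>.resolve_left hm))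

lemma exists_apply_eq_inv_card_range [Finite G] (hne : ∃ g, f g ≠ 0) :
    ∃ ξ, f ξ = 1 / Nat.card hf.toAddCircle.range := by
  have hm : (1 : ℝ) < Nat.card hf.toAddCircle.range := mod_cast hf.one_lt_card_range hne
  have hmem : ((1 / Nat.card hf.toAddCircle.range : ℝ) : AddCircle (1 : ℝ)) ∈
      hf.toAddCircle.range := by
    rw [← SetLike.mem_coe, hf.coe_range_toAddCircle_eq_torsion, Set.mem_ofPred_eq,
      ← AddCircle.coe_nsmul, nsmul_eq_mul, mul_one_div_cancel (by positivity), AddCircle.coe_period]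
  obtain ⟨ξ, hξ⟩ := hmem
  exact ⟨ξ, hf.apply_eq_of_toAddCircle_eq ⟨by positivity, (div_lt_one (by positivity)).2 hm⟩ hξ⟩

end

lemma exists_apply_eq_and_lt_of_one_sub_inv_lt {f₀ f₁ : G → ℝ} (hf₀ : IsFractionalCharacter f₀)
    (hf₁ : IsFractionalCharacter f₁) {m : ℕ} {h : G} (h0 : f₀ h = 1 / m) (h1 : 1 - 1 / m < f₁ h) :
    ∃ h', f₀ h' = 1 / m ∧ f₁ h' < f₁ h := by
  obtain ⟨h1₀, h1₁⟩ := hf₁.mem_Ico h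
  have hm : (1 : ℝ) ≤ m := by
    refine Nat.one_le_cast.2 (Nat.one_le_iff_ne_zero.2 fun hm => ?_)
    rw [hm, Nat.cast_zero, div_zero] at h1
    linarith
  have hmul : (m : ℝ) * (1 - f₁ h) < 1 := by
    rw [← lt_div_iff₀' (by positivity)]
    linarith
  refine ⟨(1 - m : ℤ) • h, ?_, ?_⟩
  · rw [hf₀.apply_zsmul, ← h0, Int.fract_eq_iff]
    refine ⟨(hf₀.mem_Ico h).1, (hf₀.mem_Ico h).2, -1, ?_⟩
    rw [h0]
    field_simp
    push_cast
    ring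
  · have hfract : Int.fract (((1 - m : ℤ) : ℝ) * f₁ h) = (m - 1) * (1 - f₁ h) :=
      Int.fract_eq_iff.2 ⟨by nlinarith, by nlinarith, 1 - m, by push_cast; ring⟩
    rw [hf₁.apply_zsmul, hfract]
    nlinarith

end IsFractionalCharacter

open IsFractionalCharacter in
theorem exists_age_one_with_minimal_first_shift_general
    (G : Type*) [AddCommGroup G] [Fintype G]
    (F : G → Fin 3 → ℝ)
    (hrange : ∀ (g : G) (j : Fin 3), F g j ∈ Set.Ico (0 : ℝ) 1)
    (hadd : ∀ (g h : G) (j : Fin 3), F (g + h) j = Int.fract (F g j + F h j))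
    (hdet : ∀ g : G, ∃ z : ℤ, F g 0 + F g 1 + F g 2 = z)
    (hne : ∃ g : G, F g 0 ≠ 0) :
    ∃ h : G, F h 0 + F h 1 + F h 2 = 1 ∧
      F h 0 = (Nat.card {g : G // F g 0 = 0} : ℝ) / (Nat.card G : ℝ) := by
  have hF (j : Fin 3) : IsFractionalCharacter (F · j) := ⟨(hrange · j), (hadd · · j)⟩
  have hcard := (hF 0).card_eq_card_zero_mul_card_range
  obtain ⟨ξ, hξ⟩ := (hF 0).exists_apply_eq_inv_card_range hne
  generalize Nat.card (hF 0).toAddCircle.range = m at hcard hξ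
  have hpos : 0 < Nat.card {g // F g 0 = 0} * m := hcard ▸ Nat.card_pos
  obtain ⟨h, hC, hmin⟩ :=
    (Finset.univ.filter (F · 0 = 1 / m)).exists_min_image (F · 1) ⟨ξ, by simpa using hξ⟩
  obtain ⟨-, hh0⟩ := Finset.mem_filter.1 hC
  have hh1 : F h 1 ≤ 1 - 1 / m := by
    by_contra! hlt
    obtain ⟨h', h'0, h'1⟩ := exists_apply_eq_and_lt_of_one_sub_inv_lt (hF 0) (hF 1) hh0 hlt
    exact (hmin h' (by simpa using h'0)).not_gt h'1
  obtain ⟨z, hz⟩ := hdet h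
  have hz1 : z = 1 := by
    have : (0 : ℝ) < 1 / m := by
      have : 0 < m := Nat.pos_of_mul_pos_left hpos
      positivity
    obtain ⟨h1₀, -⟩ := hrange h 1
    obtain ⟨h2₀, h2₁⟩ := hrange h 2
    have : 0 < z := by exact_mod_cast (by linarith : (0 : ℝ) < z)
    have : z < 2 := by exact_mod_cast (by linarith : (z : ℝ) < 2)
    omega
  have hG₀ : (Nat.card {g // F g 0 = 0} : ℝ) ≠ 0 := mod_cast (Nat.pos_of_mul_pos_right hpos).ne'
  exact ⟨h, by rw [hz, hz1, Int.cast_one],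
    by rw [hh0, hcard, Nat.cast_mul, div_mul_cancel_left₀ hG₀, one_div]⟩

/-- Let `G ⊂ SL(3,ℂ)` be a nontrivial finite abelian group acting effectively and diagonally
via fermionic shifts, with `G_0 = {g | F g 0 = 0} ≠ G`. Then there exists `h ∈ G` with age
`a(h) = 1` and `F h 0 = 1/|G/G_0| = |G_0|/|G|`. -/
theorem exists_age_one_with_minimal_first_shift
    (G : Type*) [AddCommGroup G] [Fintype G] [Nontrivial G]
    (F : G → Fin 3 → ℝ)
    (hrange : ∀ (g : G) (j : Fin 3), F g j ∈ Set.Ico (0 : ℝ) 1)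
    (hadd : ∀ (g h : G) (j : Fin 3), F (g + h) j = Int.fract (F g j + F h j))
    (hdet : ∀ g : G, ∃ z : ℤ, F g 0 + F g 1 + F g 2 = z)
    (heff : ∀ g : G, (∀ j : Fin 3, F g j = 0) → g = 0)
    (hne : ∃ g : G, F g 0 ≠ 0) :
    ∃ h : G, F h 0 + F h 1 + F h 2 = 1 ∧
      F h 0 = (Nat.card {g : G // F g 0 = 0} : ℝ) / (Nat.card G : ℝ) :=
  exists_age_one_with_minimal_first_shift_general G F hrange hadd hdet hne
end

section
/- For integers n ≥ 0 and n' arbitrary, with the convention Γ(z_1)/Γ(z_2) := lim_{x→0} Γ(x+z_1)/Γ(x+z_2), one has Γ(1+n')/Γ(−n) = (−1)^{n+n'+1} · Γ(1+n)/Γ(−n'). -/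
/-!
If `n' ≥ 0`, the numerators `Γ(1 + n')` and `Γ(1 + n)` are finite while the denominators have
poles, so both quotients tend to `0`. If `n' = -(m + 1)`, the right quotient tends to `n!/m!`,
and on the left both Gammas have poles; there the reflection formula, with
`sin (π (x - k)) = (-1)^k sin (π x)`, turns `Γ(x - m)/Γ(x - n)` into
`(-1)^(n + m) Γ(1 + n - x)/Γ(1 + m - x)` for non-integral `x`, which tends to `(-1)^(n + m) n!/m!`.
-/

open Filter Topology Complex
open scoped Nat Real

/-- Mathlib's `Gamma` vanishes at the poles and `x / 0 = 0`, so the value `Gamma a / Gamma b` agrees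
with the convention `1 / Γ(-k) = 0`. -/
theorem tendsto_Gamma_add_div_Gamma_add {a : ℂ} (ha : ∀ m : ℕ, a ≠ -m) (b : ℂ) :
    Tendsto (fun x : ℂ => Gamma (x + a) / Gamma (x + b)) (𝓝 0) (𝓝 (Gamma a / Gamma b)) := by
  have hnum : ContinuousAt (fun x : ℂ => Gamma (x + a)) 0 :=
    (differentiableAt_Gamma a ha).continuousAt.comp_of_eq (continuous_add_const a).continuousAt
      (zero_add a)
  have hden : Continuous fun x : ℂ => (Gamma (x + b))⁻¹ :=
    differentiable_one_div_Gamma.continuous.comp (continuous_add_const b)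
  simpa [div_eq_mul_inv] using hnum.tendsto.mul (hden.tendsto 0)

theorem one_add_natCast_ne_neg_natCast (k m : ℕ) : (1 + k : ℂ) ≠ -m := by
  intro h
  have := congrArg re h
  simp only [add_re, one_re, natCast_re, neg_re] at this
  linarith [(k.cast_nonneg : (0 : ℝ) ≤ k), (m.cast_nonneg : (0 : ℝ) ≤ m)]

theorem Gamma_sub_natCast_mul_Gamma_one_add_natCast_sub (z : ℂ) (k : ℕ) :
    Gamma (z - k) * Gamma (1 + k - z) = (-1) ^ k * (π / sin (π * z)) := by
  calc Gamma (z - k) * Gamma (1 + k - z) = π / sin (π * z - k * π) := by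
        rw [show 1 + k - z = 1 - (z - k) by ring, Gamma_mul_Gamma_one_sub]; ring_nf
    _ = (-1) ^ k * (π / sin (π * z)) := by
        rw [sin_antiperiodic.sub_nat_mul_eq]
        rcases neg_one_pow_eq_or ℂ k with h | h <;> simp [h, div_neg]

theorem Gamma_sub_natCast_div_Gamma_sub_natCast {x : ℂ} (hx : sin (π * x) ≠ 0) (m n : ℕ) :
    Gamma (x - m) / Gamma (x - n) = (-1) ^ (n + m) * (Gamma (1 + n - x) / Gamma (1 + m - x)) := by
  have hreflect := Gamma_sub_natCast_mul_Gamma_one_add_natCast_sub x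
  have hne (k : ℕ) : Gamma (x - k) * Gamma (1 + k - x) ≠ 0 := by
    rw [hreflect]
    exact mul_ne_zero (pow_ne_zero _ (by norm_num))
      (div_ne_zero (by exact_mod_cast Real.pi_ne_zero) hx)
  obtain ⟨-, hBm⟩ := mul_ne_zero_iff.mp (hne m)
  obtain ⟨hAn, -⟩ := mul_ne_zero_iff.mp (hne n)
  have hsq : ((-1 : ℂ) ^ n) * (-1) ^ n = 1 := by rw [← pow_add, ← two_mul, pow_mul]; norm_num
  rw [div_eq_iff hAn, pow_add]
  field_simp
  linear_combination hreflect m - (-1) ^ m * (-1) ^ n * hreflect n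
    - (-1) ^ m * (π / sin (π * x)) * hsq

theorem eventually_sin_pi_mul_ne_zero : ∀ᶠ x : ℂ in 𝓝[≠] 0, sin (π * x) ≠ 0 := by
  simpa using ((hasDerivAt_id (0 : ℂ)).const_mul (π : ℂ)).csin.eventually_ne (c := 0) (by simp)

theorem tendsto_Gamma_sub_natCast_div_Gamma_sub_natCast (m n : ℕ) :
    Tendsto (fun x : ℂ => Gamma (x - m) / Gamma (x - n)) (𝓝[≠] 0)
      (𝓝 ((-1) ^ (n + m) * (n ! / m !))) := by
  have hratio : Tendsto (fun x : ℂ => Gamma (1 + n - x) / Gamma (1 + m - x)) (𝓝 0)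
      (𝓝 (n ! / m !)) := by
    have h := (tendsto_Gamma_add_div_Gamma_add (one_add_natCast_ne_neg_natCast n) (1 + m)).comp
      (neg_zero (G := ℂ) ▸ tendsto_neg (0 : ℂ))
    rw [add_comm (1 : ℂ), add_comm (1 : ℂ), Gamma_nat_eq_factorial, Gamma_nat_eq_factorial] at h
    refine h.congr fun x => ?_
    simp only [Function.comp_apply]
    ring_nf
  refine ((hratio.const_mul _).mono_left nhdsWithin_le_nhds).congr' ?_
  filter_upwards [eventually_sin_pi_mul_ne_zero] with x hx
  exact (Gamma_sub_natCast_div_Gamma_sub_natCast hx m n).symm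

/-- For `n ∈ ℤ_{≥0}` and `n' ∈ ℤ`, with the convention
`Γ(z₁)/Γ(z₂) := lim_{x→0} Γ(x+z₁)/Γ(x+z₂)`, one has
`Γ(1+n')/Γ(−n) = (−1)^{n+n'+1} · Γ(1+n)/Γ(−n')`. -/
theorem gamma_ratio_convention_identity (n : ℕ) (n' : ℤ) :
    ∃ L M : ℂ,
      Tendsto (fun x : ℂ => Complex.Gamma (x + ((1 + n' : ℤ) : ℂ)) /
          Complex.Gamma (x + (-(n : ℂ)))) (𝓝[≠] (0 : ℂ)) (𝓝 L) ∧
      Tendsto (fun x : ℂ => Complex.Gamma (x + (1 + (n : ℂ))) /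
          Complex.Gamma (x + (-(n' : ℂ)))) (𝓝[≠] (0 : ℂ)) (𝓝 M) ∧
      L = (-1 : ℂ) ^ ((n : ℤ) + n' + 1) * M := by
  obtain ⟨k, rfl⟩ | ⟨m, rfl⟩ : (∃ k : ℕ, n' = k) ∨ ∃ m : ℕ, n' = -(m + 1) := by
    rcases n' with k | m
    exacts [.inl ⟨k, rfl⟩, .inr ⟨m, Int.negSucc_eq m⟩]
  · refine ⟨0, 0, ?_, ?_, by simp⟩
    · have h := tendsto_Gamma_add_div_Gamma_add (a := ((1 + k : ℤ) : ℂ))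
        (by push_cast; exact one_add_natCast_ne_neg_natCast k) (-n)
      rw [Gamma_neg_nat_eq_zero, div_zero] at h
      exact tendsto_nhdsWithin_of_tendsto_nhds h
    · have h := tendsto_Gamma_add_div_Gamma_add (one_add_natCast_ne_neg_natCast n) (-((k : ℤ) : ℂ))
      rw [Int.cast_natCast, Gamma_neg_nat_eq_zero, div_zero] at h
      exact tendsto_nhdsWithin_of_tendsto_nhds h
  · have hsign : (-1 : ℂ) ^ ((n : ℤ) + -(m + 1) + 1) = (-1) ^ (n + m) := by
      rw [show (n : ℤ) + -(m + 1) + 1 = ((n + m : ℕ) : ℤ) + (-2) * m by push_cast; ring,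
        zpow_add₀ (by norm_num), zpow_mul, zpow_natCast]
      norm_num
    refine ⟨(-1) ^ (n + m) * (n ! / m !), n ! / m !, ?_, ?_, by rw [hsign]⟩
    · refine (tendsto_Gamma_sub_natCast_div_Gamma_sub_natCast m n).congr fun x => ?_
      push_cast
      ring_nf
    · convert tendsto_nhdsWithin_of_tendsto_nhds (tendsto_Gamma_add_div_Gamma_add
        (one_add_natCast_ne_neg_natCast n) (-((-(m + 1) : ℤ) : ℂ))) using 2
      push_cast
      rw [neg_neg, add_comm, Gamma_nat_eq_factorial, Gamma_nat_eq_factorial]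
end

section
/- Let G be a finite abelian subgroup of SL(3,ℂ) with fermionic shifts F_g^(j), let G_s = {g ∈ G : a(g)=1}, and let l_j, l_g (g ∈ G_s) ∈ ℝ^s satisfy ∑_{g∈G_s} F_g^(j) l_g + l_j = 0 for j=0,1,2. If m ∈ ℤ^s_{≥0} satisfies ⟨m, l_0⟩ < 0 and ⟨m, l_i⟩ ≥ 0 for all i ∈ S∖{0}, then there is a contradiction: no such m exists. (Lemma: if i ∈ {0,1,2} and ⟨m, l_i⟩ < 0 then ∏_{i'≠i} 1/Γ(1+⟨m,l_{i'}⟩) = 0, i.e. some ⟨m,l_{i'}⟩ is a negative integer.) -/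
/-!
Pair everything with `m`: the numbers `x_g = ⟨m, l_g⟩` and `y_j = ⟨m, l_j⟩` satisfy
`∑_g F_g^(j) x_g + y_j = 0`. Adding the relations for `j = 1, 2` gives
`∑_g (1 - F_g^(0)) x_g = -(y_1 + y_2) ≤ 0`, a sum of non-negative terms with positive weights,
so every `x_g` vanishes and then so does `y_0`, contradicting `⟨m, l_0⟩ < 0`.
-/

open Finset

lemma sum_mul_pairing_add_pairing_eq_zero {ι κ : Type*} [Fintype ι] [Fintype κ]
    (c : ι → ℝ) (v : ι → κ → ℝ) (w m : κ → ℝ) (h : ∀ k, ∑ g, c g * v g k + w k = 0) :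
    ∑ g, c g * ∑ k, m k * v g k + ∑ k, m k * w k = 0 := by
  simp_rw [mul_sum]
  rw [sum_comm, ← sum_add_distrib]
  refine sum_eq_zero fun k _ => ?_
  calc ∑ g, c g * (m k * v g k) + m k * w k = m k * (∑ g, c g * v g k + w k) := by
        rw [mul_add, mul_sum]
        simp only [mul_left_comm]
    _ = 0 := by rw [h k, mul_zero]

lemma eq_zero_of_sum_mul_nonpos {ι : Type*} [Fintype ι] {w x : ι → ℝ}
    (hw : ∀ g, 0 < w g) (hx : ∀ g, 0 ≤ x g) (h : ∑ g, w g * x g ≤ 0) (g : ι) : x g = 0 := by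
  have hterm : ∀ g ∈ univ, 0 ≤ w g * x g := fun g _ => mul_nonneg (hw g).le (hx g)
  have hsum : ∑ g, w g * x g = 0 := le_antisymm h (sum_nonneg hterm)
  have hg : w g * x g = 0 := (sum_eq_zero_iff_of_nonneg hterm).1 hsum g (mem_univ g)
  exact (mul_eq_zero.1 hg).resolve_left (hw g).ne'

lemma eq_zero_of_shift_relations_of_nonneg {ι : Type*} [Fintype ι] {F : ι → Fin 3 → ℝ}
    (hF0 : ∀ g, F g 0 < 1) (hsum : ∀ g, F g 0 + F g 1 + F g 2 = 1)
    {x : ι → ℝ} {y : Fin 3 → ℝ} (hx : ∀ g, 0 ≤ x g)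
    (hrel : ∀ j, ∑ g, F g j * x g + y j = 0) (hy1 : 0 ≤ y 1) (hy2 : 0 ≤ y 2) : y 0 = 0 := by
  have hweighted : ∑ g, (1 - F g 0) * x g ≤ 0 := by
    have h12 : ∑ g, (1 - F g 0) * x g = ∑ g, F g 1 * x g + ∑ g, F g 2 * x g := by
      rw [← sum_add_distrib]
      refine sum_congr rfl fun g _ => ?_
      rw [← hsum g]
      ring
    linarith [hrel 1, hrel 2]
  have hx0 : ∀ g, x g = 0 :=
    eq_zero_of_sum_mul_nonpos (fun g => sub_pos.2 (hF0 g)) hx hweighted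
  simpa [hx0] using hrel 0

theorem no_nonneg_vector_with_negative_l0_pairing_general
    (s : ℕ) (ι : Type*) [Fintype ι]
    (F : ι → Fin 3 → ℚ)
    (hrange : ∀ (g : ι) (j : Fin 3), 0 ≤ F g j ∧ F g j < 1)
    (hage : ∀ g : ι, F g 0 + F g 1 + F g 2 = 1)
    (l : (Fin 3 ⊕ ι) → Fin s → ℝ)
    (hrel : ∀ (j : Fin 3) (k : Fin s),
      (∑ g : ι, (F g j : ℝ) * l (Sum.inr g) k) + l (Sum.inl j) k = 0)
    (m : Fin s → ℤ)
    (hneg : ∑ k : Fin s, (m k : ℝ) * l (Sum.inl 0) k < 0)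
    (hpos : ∀ i : Fin 3 ⊕ ι, i ≠ Sum.inl 0 → 0 ≤ ∑ k : Fin s, (m k : ℝ) * l i k) :
    False := by
  set p : Fin 3 ⊕ ι → ℝ := fun i => ∑ k, (m k : ℝ) * l i k
  have hpaired : ∀ j, ∑ g, (F g j : ℝ) * p (.inr g) + p (.inl j) = 0 := fun j =>
    sum_mul_pairing_add_pairing_eq_zero _ _ _ _ (hrel j)
  have hp0 : p (.inl 0) = 0 :=
    eq_zero_of_shift_relations_of_nonneg (F := fun g j => (F g j : ℝ)) (x := fun g => p (.inr g))
      (fun g => by exact_mod_cast (hrange g 0).2) (fun g => by exact_mod_cast hage g)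
      (fun g => hpos _ Sum.inr_ne_inl) hpaired (hpos _ (by simp)) (hpos _ (by simp))
  exact hneg.ne hp0

/-- (Lemma `Frobenius lemma 5` abstraction.) Index `S = {0,1,2} ⊔ G_s` with vectors
`l i ∈ ℝ^s`, relations `∑_{g ∈ G_s} F g j • l (inr g) + l (inl j) = 0` for `j = 0,1,2`,
where `F g j ∈ ℚ ∩ [0,1)` with `F g 0 + F g 1 + F g 2 = 1` for `g ∈ G_s`, and all pairings
`⟨m, l i⟩` integral. Then no `m ∈ ℤ^s_{≥0}` can satisfy `⟨m, l (inl 0)⟩ < 0` while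
`⟨m, l i⟩ ≥ 0` for every other index `i`. -/
theorem no_nonneg_vector_with_negative_l0_pairing
    (s : ℕ) (ι : Type*) [Fintype ι]
    (F : ι → Fin 3 → ℚ)
    (hrange : ∀ (g : ι) (j : Fin 3), 0 ≤ F g j ∧ F g j < 1)
    (hage : ∀ g : ι, F g 0 + F g 1 + F g 2 = 1)
    (l : (Fin 3 ⊕ ι) → Fin s → ℝ)
    (hrel : ∀ (j : Fin 3) (k : Fin s),
      (∑ g : ι, (F g j : ℝ) * l (Sum.inr g) k) + l (Sum.inl j) k = 0)
    (hint : ∀ (m : Fin s → ℤ) (i : Fin 3 ⊕ ι), ∃ z : ℤ, ∑ k : Fin s, (m k : ℝ) * l i k = z)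
    (m : Fin s → ℤ) (hm : ∀ k, 0 ≤ m k)
    (hneg : ∑ k : Fin s, (m k : ℝ) * l (Sum.inl 0) k < 0)
    (hpos : ∀ i : Fin 3 ⊕ ι, i ≠ Sum.inl 0 → 0 ≤ ∑ k : Fin s, (m k : ℝ) * l i k) :
    False :=
  no_nonneg_vector_with_negative_l0_pairing_general s ι F hrange hage l hrel m hneg hpos
end
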